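/- arXiv:1710.10434 — 5 statements merged into one kernel-verified Lean document; each statement's English description precedes it below -/
import Mathlib

section
/- For every integer n ≥ 3, if n is odd then the alternating group A_n is generated by the 3-cycle (1,2,3) and the n-cycle (1,2,…,n); if n is even then A_n is generated by (1,2,3) and the (n−1)-cycle (2,3,…,n). -/
open Equiv Equiv.Perm

namespace Stmt0Aux

variable {n : ℕ}

/-- adjacent swap -/
def s (n : ℕ) (i : ℕ) (h : i + 1 < n) : Perm (Fin n) :=
  Equiv.swap ⟨i, Nat.lt_of_succ_lt h⟩ ⟨i + 1, h⟩

lemma s_mul_self (i : ℕ) (h : i + 1 < n) : s n i h * s n i h = 1 :=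
  Equiv.swap_mul_self _ _

lemma s_inv (i : ℕ) (h : i + 1 < n) : (s n i h)⁻¹ = s n i h :=
  Equiv.swap_inv _ _

def IsAdj (n : ℕ) (x : Perm (Fin n)) : Prop := ∃ i, ∃ h : i + 1 < n, x = s n i h

lemma four_swap {α : Type*} [DecidableEq α] {a b c d : α}
    (hab : a ≠ b) (hac : a ≠ c) (had : a ≠ d) (hbc : b ≠ c) (hbd : b ≠ d) (hcd : c ≠ d) :
    Equiv.swap b c * Equiv.swap c d =
      (Equiv.swap a b * Equiv.swap b c) * (Equiv.swap a c * Equiv.swap c d) := by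
  have h1 : Equiv.swap a b = Equiv.swap b c * Equiv.swap a c * (Equiv.swap b c)⁻¹ := by
    rw [← Equiv.swap_apply_apply, Equiv.swap_apply_of_ne_of_ne hab hac,
      Equiv.swap_apply_right]
  have key : Equiv.swap a b * Equiv.swap b c * Equiv.swap a c = Equiv.swap b c := by
    rw [h1, Equiv.swap_inv]
    simp [mul_assoc, Equiv.swap_mul_self]
  rw [← mul_assoc, key]

lemma pair_mem {H : Subgroup (Perm (Fin n))}
    (ht : ∀ i (h : i + 2 < n), s n i (by omega) * s n (i + 1) h ∈ H) :
    ∀ i j (hi : i + 1 < n) (hj : j + 1 < n), s n i hi * s n j hj ∈ H := by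
  have key : ∀ i (hi : i + 1 < n) j, i ≤ j → ∀ (hj : j + 1 < n), s n i hi * s n j hj ∈ H := by
    intro i hi j hij
    induction hij with
    | refl => intro hj; rw [s_mul_self]; exact H.one_mem
    | @step m hm ih =>
      intro hj
      have h1 : m + 1 < n := by omega
      have : s n i hi * s n (m + 1) hj =
          (s n i hi * s n m h1) * (s n m h1 * s n (m + 1) hj) := by
        rw [mul_assoc, ← mul_assoc (s n m h1), s_mul_self, one_mul]
      rw [this]
      exact H.mul_mem (ih h1) (ht m (by omega))
  intro i j hi hj
  rcases le_or_gt i j with h | h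
  · exact key i hi j h hj
  · have := H.inv_mem (key j hj i h.le hi)
    rwa [mul_inv_rev, s_inv, s_inv] at this

lemma swap_decomp_lt : ∀ (j i : ℕ) (hj : j < n) (hi : i < n), i < j →
    ∃ l : List (Perm (Fin n)), (∀ x ∈ l, IsAdj n x) ∧ l.length % 2 = 1 ∧
      l.prod = Equiv.swap ⟨i, hi⟩ ⟨j, hj⟩ := by
  intro j
  induction j with
  | zero => omega
  | succ j ih =>
    intro i hj hi hij
    rcases eq_or_lt_of_le (Nat.le_of_lt_succ hij) with rfl | hlt
    · refine ⟨[s n i hj], ?_, by simp, by simp [s]⟩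
      intro x hx
      rcases List.mem_singleton.1 hx with rfl
      exact ⟨i, hj, rfl⟩
    · have hjn : j < n := by omega
      obtain ⟨l, h1, h2, h3⟩ := ih i hjn hi hlt
      refine ⟨s n j hj :: l ++ [s n j hj], ?_, ?_, ?_⟩
      · intro x hx
        rcases List.mem_cons.1 hx with rfl | hx
        · exact ⟨j, hj, rfl⟩
        rcases List.mem_append.1 hx with hx | hx
        · exact h1 x hx
        · rcases List.mem_singleton.1 hx with rfl
          exact ⟨j, hj, rfl⟩
      · simp only [List.length_cons, List.length_append, List.length_nil]
        omega
      · have hfi : (s n j hj) ⟨i, hi⟩ = ⟨i, hi⟩ := by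
          simp only [s]
          exact Equiv.swap_apply_of_ne_of_ne (Fin.ne_of_val_ne (show i ≠ j by omega))
            (Fin.ne_of_val_ne (show i ≠ j + 1 by omega))
        have hfj : (s n j hj) ⟨j, hjn⟩ = ⟨j + 1, hj⟩ := by
          simp only [s]
          exact Equiv.swap_apply_left _ _
        simp only [List.prod_cons, List.prod_append, List.prod_singleton]
        rw [← mul_assoc, h3]
        calc s n j hj * Equiv.swap ⟨i, hi⟩ ⟨j, hjn⟩ * s n j hj
            = s n j hj * Equiv.swap ⟨i, hi⟩ ⟨j, hjn⟩ * (s n j hj)⁻¹ := by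
              rw [s_inv, mul_assoc]
          _ = Equiv.swap ((s n j hj) ⟨i, hi⟩) ((s n j hj) ⟨j, hjn⟩) :=
              (Equiv.swap_apply_apply _ _ _).symm
          _ = Equiv.swap ⟨i, hi⟩ ⟨j + 1, hj⟩ := by rw [hfi, hfj]

lemma swap_decomp (a b : Fin n) (hab : a ≠ b) :
    ∃ l : List (Perm (Fin n)), (∀ x ∈ l, IsAdj n x) ∧ l.length % 2 = 1 ∧
      l.prod = Equiv.swap a b := by
  rcases lt_trichotomy a.val b.val with h | h | h
  · obtain ⟨l, h1, h2, h3⟩ := swap_decomp_lt b.val a.val b.isLt a.isLt h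
    exact ⟨l, h1, h2, by simpa using h3⟩
  · exact absurd (Fin.ext h) hab
  · obtain ⟨l, h1, h2, h3⟩ := swap_decomp_lt a.val b.val a.isLt b.isLt h
    refine ⟨l, h1, h2, by rw [Equiv.swap_comm]; simpa using h3⟩

lemma even_adj_prod_mem {H : Subgroup (Perm (Fin n))}
    (hpair : ∀ x y : Perm (Fin n), IsAdj n x → IsAdj n y → x * y ∈ H) :
    ∀ l : List (Perm (Fin n)), (∀ x ∈ l, IsAdj n x) → l.length % 2 = 0 → l.prod ∈ H
  | [], _, _ => by simpa using H.one_mem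
  | [x], _, h => by simp at h
  | x :: y :: l, hl, hlen => by
    rw [List.prod_cons, List.prod_cons, ← mul_assoc]
    refine H.mul_mem (hpair x y (hl x (by simp)) (hl y (by simp)))
      (even_adj_prod_mem hpair l (fun z hz => hl z (by simp [hz])) ?_)
    simp only [List.length_cons] at hlen
    omega

lemma alternating_le (H : Subgroup (Perm (Fin n)))
    (hpair : ∀ x y : Perm (Fin n), IsAdj n x → IsAdj n y → x * y ∈ H) :
    alternatingGroup (Fin n) ≤ H := by
  intro σ hσ
  obtain ⟨l, hl1, hl2⟩ := (Equiv.Perm.truncSwapFactors σ).out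
  have hsign : Equiv.Perm.sign σ = 1 := Equiv.Perm.mem_alternatingGroup.1 hσ
  have hlen : Even l.length := by
    have := Equiv.Perm.sign_prod_list_swap hl2
    rw [hl1, hsign] at this
    exact (neg_one_pow_eq_one_iff_even (by decide : (-1 : ℤˣ) ≠ 1)).1 this.symm
  have key : ∀ l : List (Perm (Fin n)), (∀ g ∈ l, Equiv.Perm.IsSwap g) →
      ∃ m : List (Perm (Fin n)), (∀ x ∈ m, IsAdj n x) ∧
        m.length % 2 = l.length % 2 ∧ m.prod = l.prod := by
    intro l
    induction l with
    | nil => exact fun _ => ⟨[], by simp, by simp, by simp⟩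
    | cons g l ih =>
      intro h
      obtain ⟨m, hm1, hm2, hm3⟩ := ih (fun x hx => h x (by simp [hx]))
      obtain ⟨a, b, hab, rfl⟩ := h g (by simp)
      obtain ⟨m', h1', h2', h3'⟩ := swap_decomp a b hab
      refine ⟨m' ++ m, ?_, ?_, ?_⟩
      · intro x hx
        rcases List.mem_append.1 hx with hx | hx
        exacts [h1' x hx, hm1 x hx]
      · simp only [List.length_append, List.length_cons]; omega
      · rw [List.prod_append, h3', hm3, List.prod_cons]
  obtain ⟨m, hm1, hm2, hm3⟩ := key l hl2
  have : m.length % 2 = 0 := by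
    rcases hlen with ⟨k, hk⟩
    omega
  rw [← hl1, ← hm3]
  exact even_adj_prod_mem hpair m hm1 this


lemma conj_swap_mul_swap (f : Perm (Fin n)) (a b c d : Fin n) :
    f * (Equiv.swap a b * Equiv.swap c d) * f⁻¹ =
      Equiv.swap (f a) (f b) * Equiv.swap (f c) (f d) := by
  rw [Equiv.swap_apply_apply f a b, Equiv.swap_apply_apply f c d]
  group

lemma take3 (hn : 3 ≤ n) :
    (List.finRange n).take 3 = [⟨0, by omega⟩, ⟨1, by omega⟩, ⟨2, by omega⟩] := by
  apply List.ext_getElem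
  · simp only [List.length_take, List.length_finRange, List.length_cons, List.length_nil]
    omega
  · intro i hi1 hi2
    simp only [List.length_take, List.length_finRange] at hi1
    have hi3 : i < 3 := by omega
    rw [List.getElem_take]
    interval_cases i <;> simp [List.getElem_finRange]

lemma form3 (hn : 3 ≤ n) :
    List.formPerm ((List.finRange n).take 3) = s n 0 (by omega) * s n 1 (by omega) := by
  rw [take3 hn]
  simp only [List.formPerm_cons_cons, List.formPerm_singleton, mul_one]
  rfl

lemma sign_form3 (hn : 3 ≤ n) :
    Equiv.Perm.sign (List.formPerm ((List.finRange n).take 3)) = 1 := by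
  rw [form3 hn, map_mul]
  unfold s
  rw [Equiv.Perm.sign_swap (Fin.ne_of_val_ne (show (0:ℕ) ≠ 0 + 1 by omega)),
    Equiv.Perm.sign_swap (Fin.ne_of_val_ne (show (1:ℕ) ≠ 1 + 1 by omega))]
  decide

lemma sign_cycle_full (hn : 3 ≤ n) (hodd : Odd n) :
    Equiv.Perm.sign (List.formPerm (List.finRange n)) = 1 := by
  have hnodup := List.nodup_finRange n
  have hcyc : (List.formPerm (List.finRange n)).IsCycle :=
    List.isCycle_formPerm hnodup (by simp only [List.length_finRange]; omega)
  have hsupp : (List.formPerm (List.finRange n)).support = (List.finRange n).toFinset :=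
    List.support_formPerm_of_nodup _ hnodup (fun x hx => by
      apply_fun List.length at hx
      simp only [List.length_finRange, List.length_cons, List.length_nil] at hx
      omega)
  have hcard : (List.formPerm (List.finRange n)).support.card = n := by
    rw [hsupp, List.toFinset_card_of_nodup hnodup, List.length_finRange]
  rw [hcyc.sign, hcard, Odd.neg_one_pow hodd, neg_neg]

lemma cycle_full_apply (i : ℕ) (h : i + 1 < n) :
    List.formPerm (List.finRange n) ⟨i, by omega⟩ = ⟨i + 1, h⟩ := by
  have h' : i + 1 < (List.finRange n).length := by
    simp only [List.length_finRange]; omega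
  have := List.formPerm_apply_lt_getElem (List.finRange n) (List.nodup_finRange n) i h'
  simpa using this

-- facts about the dropped list
lemma drop1_nodup : ((List.finRange n).drop 1).Nodup :=
  (List.nodup_finRange n).sublist (List.drop_sublist 1 _)

lemma drop1_length : ((List.finRange n).drop 1).length = n - 1 := by
  simp

lemma cycle_drop_apply (i : ℕ) (h : i + 2 < n) :
    List.formPerm ((List.finRange n).drop 1) ⟨i + 1, by omega⟩ = ⟨i + 2, h⟩ := by
  have h' : i + 1 < ((List.finRange n).drop 1).length := by
    rw [drop1_length]; omega
  have := List.formPerm_apply_lt_getElem _ (drop1_nodup (n := n)) i h'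
  simpa using this

lemma cycle_drop_apply_zero (hn : 3 ≤ n) :
    List.formPerm ((List.finRange n).drop 1) ⟨0, by omega⟩ = ⟨0, by omega⟩ := by
  apply List.formPerm_apply_of_notMem
  intro hmem
  obtain ⟨i, hi, hval⟩ := List.mem_iff_getElem.1 hmem
  apply_fun Fin.val at hval
  simp at hval

lemma sign_cycle_drop (hn : 3 ≤ n) (heven : Even n) :
    Equiv.Perm.sign (List.formPerm ((List.finRange n).drop 1)) = 1 := by
  have h4 : 4 ≤ n := by
    rcases heven with ⟨k, hk⟩; omega
  have hnodup := drop1_nodup (n := n)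
  have hcyc : (List.formPerm ((List.finRange n).drop 1)).IsCycle :=
    List.isCycle_formPerm hnodup (by rw [drop1_length]; omega)
  have hsupp := List.support_formPerm_of_nodup _ hnodup (fun x hx => by
    apply_fun List.length at hx
    rw [drop1_length] at hx
    simp only [List.length_cons, List.length_nil] at hx
    omega)
  have hcard : (List.formPerm ((List.finRange n).drop 1)).support.card = n - 1 := by
    rw [hsupp, List.toFinset_card_of_nodup hnodup, drop1_length]
  have hodd : Odd (n - 1) := Nat.Even.sub_odd (by omega) heven odd_one
  rw [hcyc.sign, hcard, Odd.neg_one_pow hodd, neg_neg]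



end Stmt0Aux


namespace Stmt0Aux

lemma main_mem (hn : 3 ≤ n) (H : Subgroup (Perm (Fin n)))
    (ht : ∀ i (h : i + 2 < n), s n i (by omega) * s n (i + 1) (by omega) ∈ H) :
    alternatingGroup (Fin n) ≤ H := by
  apply alternating_le
  rintro x y ⟨i, hi, rfl⟩ ⟨j, hj, rfl⟩
  exact pair_mem (fun i h => ht i h) i j hi hj

lemma odd_supply (hn : 3 ≤ n) (H : Subgroup (Perm (Fin n)))
    (htm : List.formPerm ((List.finRange n).take 3) ∈ H)
    (hcm : List.formPerm (List.finRange n) ∈ H) :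
    ∀ i (h : i + 2 < n), s n i (by omega) * s n (i + 1) (by omega) ∈ H := by
  intro i
  induction i with
  | zero =>
    intro h
    have h2 := htm
    rw [form3 hn] at h2
    exact h2
  | succ i ih =>
    intro h
    have hi : i + 2 < n := by omega
    have hmem := ih hi
    have hmem2 := H.mul_mem (H.mul_mem hcm hmem) (H.inv_mem hcm)
    have key : List.formPerm (List.finRange n) *
        (s n i (by omega) * s n (i + 1) (by omega)) * (List.formPerm (List.finRange n))⁻¹ =
        s n (i + 1) (by omega) * s n (i + 2) (by omega) := by
      unfold s
      rw [conj_swap_mul_swap, cycle_full_apply i (by omega), cycle_full_apply (i + 1) (by omega),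
        cycle_full_apply (i + 2) (by omega)]
    rwa [key] at hmem2

lemma even_supply (hn : 3 ≤ n) (H : Subgroup (Perm (Fin n)))
    (htm : List.formPerm ((List.finRange n).take 3) ∈ H)
    (hcm : List.formPerm ((List.finRange n).drop 1) ∈ H) :
    ∀ i (h : i + 2 < n), s n i (by omega) * s n (i + 1) (by omega) ∈ H := by
  have hu : ∀ k (h : k + 2 < n), Equiv.swap (⟨0, by omega⟩ : Fin n) ⟨k + 1, by omega⟩ *
      Equiv.swap (⟨k + 1, by omega⟩ : Fin n) ⟨k + 2, h⟩ ∈ H := by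
    intro k
    induction k with
    | zero =>
      intro h
      have h2 := htm
      rw [form3 hn] at h2
      exact h2
    | succ k ih =>
      intro h
      have hk : k + 2 < n := by omega
      have hmem := ih hk
      have hmem2 := H.mul_mem (H.mul_mem hcm hmem) (H.inv_mem hcm)
      have key : List.formPerm ((List.finRange n).drop 1) *
          (Equiv.swap (⟨0, by omega⟩ : Fin n) ⟨k + 1, by omega⟩ *
            Equiv.swap (⟨k + 1, by omega⟩ : Fin n) ⟨k + 2, hk⟩) *
          (List.formPerm ((List.finRange n).drop 1))⁻¹ =
          Equiv.swap (⟨0, by omega⟩ : Fin n) ⟨k + 2, by omega⟩ *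
            Equiv.swap (⟨k + 2, by omega⟩ : Fin n) ⟨k + 3, by omega⟩ := by
        rw [conj_swap_mul_swap, cycle_drop_apply_zero hn, cycle_drop_apply k hk,
          cycle_drop_apply (k + 1) h]
      rwa [key] at hmem2
  intro i
  cases i with
  | zero =>
    intro h
    have h2 := htm
    rw [form3 hn] at h2
    exact h2
  | succ k =>
    intro h
    have h1 := hu k (by omega)
    have h2 := hu (k + 1) h
    have hmem := H.mul_mem h1 h2
    have key := four_swap (a := (⟨0, by omega⟩ : Fin n)) (b := ⟨k + 1, by omega⟩)
      (c := ⟨k + 2, by omega⟩) (d := ⟨k + 3, by omega⟩)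
      (Fin.ne_of_val_ne (show (0:ℕ) ≠ k + 1 by omega))
      (Fin.ne_of_val_ne (show (0:ℕ) ≠ k + 2 by omega))
      (Fin.ne_of_val_ne (show (0:ℕ) ≠ k + 3 by omega))
      (Fin.ne_of_val_ne (show k + 1 ≠ k + 2 by omega))
      (Fin.ne_of_val_ne (show k + 1 ≠ k + 3 by omega))
      (Fin.ne_of_val_ne (show k + 2 ≠ k + 3 by omega))
    rw [← key] at hmem
    exact hmem

end Stmt0Aux

theorem stmt_0 (n : ℕ) (hn : 3 ≤ n) :
    (Odd n → Subgroup.closure {List.formPerm ((List.finRange n).take 3),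
        List.formPerm (List.finRange n)} = alternatingGroup (Fin n)) ∧
    (Even n → Subgroup.closure {List.formPerm ((List.finRange n).take 3),
        List.formPerm ((List.finRange n).drop 1)} = alternatingGroup (Fin n)) := by
  constructor
  · intro hodd
    apply le_antisymm
    · rw [Subgroup.closure_le]
      rintro x hx
      simp only [Set.mem_insert_iff, Set.mem_singleton_iff] at hx
      rcases hx with rfl | rfl
      · exact Equiv.Perm.mem_alternatingGroup.2 (Stmt0Aux.sign_form3 hn)
      · exact Equiv.Perm.mem_alternatingGroup.2 (Stmt0Aux.sign_cycle_full hn hodd)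
    · exact Stmt0Aux.main_mem hn _ (Stmt0Aux.odd_supply hn _
        (Subgroup.subset_closure (by simp)) (Subgroup.subset_closure (by simp)))
  · intro heven
    apply le_antisymm
    · rw [Subgroup.closure_le]
      rintro x hx
      simp only [Set.mem_insert_iff, Set.mem_singleton_iff] at hx
      rcases hx with rfl | rfl
      · exact Equiv.Perm.mem_alternatingGroup.2 (Stmt0Aux.sign_form3 hn)
      · exact Equiv.Perm.mem_alternatingGroup.2 (Stmt0Aux.sign_cycle_drop hn heven)
    · exact Stmt0Aux.main_mem hn _ (Stmt0Aux.even_supply hn _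
        (Subgroup.subset_closure (by simp)) (Subgroup.subset_closure (by simp)))
end

section
/- Let G be a finite group and x, y ∈ G. Then Q(x,y) ≤ ∑_{H ∈ M(y)} fpr(x, G/H), where M(y) is the set of maximal subgroups of G containing y, Q(x,y) = |{z ∈ y^G : ⟨x,z⟩ ≠ G}| / |y^G|, and fpr(x, G/H) = |x^G ∩ H| / |x^G|. -/
open scoped Classical in
/-- Fiber counting: the number of `g` with `P (g y g⁻¹)` equals the number of
conjugates `z` of `y` satisfying `P` times the size of the centralizer of `y`. -/
lemma conj_count_aux {G : Type*} [Group G] [Fintype G] (y : G) (P : G → Prop) :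
    Nat.card {g : G // P (g * y * g⁻¹)} =
      Nat.card {z : G // IsConj y z ∧ P z} * Nat.card {c : G // c * y * c⁻¹ = y} := by
  have e1 : {g : G // P (g * y * g⁻¹)} ≃
      Σ z : {z : G // IsConj y z ∧ P z}, {g : G // g * y * g⁻¹ = z.1} :=
    { toFun := fun g => ⟨⟨g.1 * y * g.1⁻¹, isConj_iff.mpr ⟨g.1, rfl⟩, g.2⟩, g.1, rfl⟩
      invFun := fun p => ⟨p.2.1, by rw [p.2.2]; exact p.1.2.2⟩
      left_inv := fun g => rfl
      right_inv := by
        rintro ⟨⟨z, hz⟩, ⟨g, hg⟩⟩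
        simp only at hg
        subst hg
        rfl }
  have e2 : ∀ z : {z : G // IsConj y z ∧ P z},
      Nat.card {g : G // g * y * g⁻¹ = z.1} = Nat.card {c : G // c * y * c⁻¹ = y} := by
    rintro ⟨z, hz, -⟩
    obtain ⟨g₀, hg₀⟩ := isConj_iff.mp hz
    refine Nat.card_congr
      { toFun := fun g => ⟨g₀⁻¹ * g.1, ?_⟩
        invFun := fun c => ⟨g₀ * c.1, ?_⟩
        left_inv := fun g => by simp
        right_inv := fun c => by simp }
    · obtain ⟨g, hg⟩ := g
      simp only at hg ⊢
      rw [mul_inv_rev, inv_inv, show g₀⁻¹ * g * y * (g⁻¹ * g₀) = g₀⁻¹ * (g * y * g⁻¹) * g₀ by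
        group, hg, ← hg₀]
      group
    · obtain ⟨c, hc⟩ := c
      simp only at hc ⊢
      rw [mul_inv_rev, show g₀ * c * y * (c⁻¹ * g₀⁻¹) = g₀ * (c * y * c⁻¹) * g₀⁻¹ by group, hc,
        hg₀]
  rw [Nat.card_congr e1]
  rw [Nat.card_eq_fintype_card, Fintype.card_sigma]
  rw [Finset.sum_congr rfl (fun z _ => by rw [← Nat.card_eq_fintype_card, e2 z])]
  simp [Finset.sum_const, mul_comm, Nat.card_eq_fintype_card]

open scoped Classical in
theorem stmt_4 (G : Type*) [Group G] [Fintype G] [Fintype (Subgroup G)] (x y : G) :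
    (Nat.card {z : G // IsConj y z ∧ Subgroup.closure {x, z} ≠ ⊤} : ℝ) /
      (Nat.card {z : G // IsConj y z} : ℝ) ≤
    ∑ H ∈ Finset.univ.filter (fun H : Subgroup G => IsCoatom H ∧ y ∈ H),
      (Nat.card {g : G // IsConj x g ∧ g ∈ H} : ℝ) /
        (Nat.card {g : G // IsConj x g} : ℝ) := by
  set S := Finset.univ.filter (fun H : Subgroup G => IsCoatom H ∧ y ∈ H) with hS
  set n := Nat.card G with hn
  set Cy := Nat.card {c : G // c * y * c⁻¹ = y} with hCy
  set Cx := Nat.card {c : G // c * x * c⁻¹ = x} with hCx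
  haveI : Nonempty {c : G // c * y * c⁻¹ = y} := ⟨⟨1, by group⟩⟩
  haveI : Nonempty {c : G // c * x * c⁻¹ = x} := ⟨⟨1, by group⟩⟩
  have hCy0 : 0 < Cy := Nat.card_pos
  have hCx0 : 0 < Cx := Nat.card_pos
  have hn0 : 0 < n := Nat.card_pos
  -- counting identities
  have hB : Nat.card {z : G // IsConj y z} * Cy = n := by
    have := conj_count_aux y (fun _ => True)
    simp only [and_true] at this
    rw [← this]
    exact Nat.card_congr (Equiv.subtypeUnivEquiv fun _ => trivial)
  have hA : Nat.card {z : G // IsConj y z ∧ Subgroup.closure {x, z} ≠ ⊤} * Cy =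
      Nat.card {g : G // Subgroup.closure {x, g * y * g⁻¹} ≠ ⊤} :=
    (conj_count_aux y (fun z => Subgroup.closure {x, z} ≠ ⊤)).symm
  have hc : Nat.card {g : G // IsConj x g} * Cx = n := by
    have := conj_count_aux x (fun _ => True)
    simp only [and_true] at this
    rw [← this]
    exact Nat.card_congr (Equiv.subtypeUnivEquiv fun _ => trivial)
  have ha : ∀ H : Subgroup G, Nat.card {g : G // IsConj x g ∧ g ∈ H} * Cx =
      Nat.card {g : G // g * x * g⁻¹ ∈ H} :=
    fun H => (conj_count_aux x (fun z => z ∈ H)).symm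
  -- the key injection
  have key : Nat.card {g : G // Subgroup.closure {x, g * y * g⁻¹} ≠ ⊤} ≤
      ∑ H ∈ S, Nat.card {g : G // g * x * g⁻¹ ∈ H} := by
    have hsig : Nat.card (Σ H : S, {g : G // g * x * g⁻¹ ∈ (H : Subgroup G)}) =
        ∑ H ∈ S, Nat.card {g : G // g * x * g⁻¹ ∈ H} := by
      rw [Nat.card_eq_fintype_card, Fintype.card_sigma, ← Finset.sum_coe_sort S]
      exact Finset.sum_congr rfl fun H _ => (Nat.card_eq_fintype_card).symm
    rw [← hsig]
    -- construct the injection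
    have : ∀ g : {g : G // Subgroup.closure {x, g * y * g⁻¹} ≠ ⊤},
        ∃ H : Subgroup G, (IsCoatom H ∧ y ∈ H) ∧ g.1⁻¹ * x * (g.1⁻¹)⁻¹ ∈ H := by
      rintro ⟨g, hg⟩
      obtain ⟨H', hH', hle⟩ :=
        (eq_top_or_exists_le_coatom (Subgroup.closure {x, g * y * g⁻¹})).resolve_left hg
      have hx : x ∈ H' := hle (Subgroup.subset_closure (by simp))
      have hgy : g * y * g⁻¹ ∈ H' := hle (Subgroup.subset_closure (by simp))
      refine ⟨Subgroup.map ((MulAut.conj g⁻¹) : G ≃* G).toMonoidHom H', ⟨?_, ?_⟩, ?_⟩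
      · exact (OrderIso.isCoatom_iff (MulEquiv.mapSubgroup ((MulAut.conj g⁻¹) : G ≃* G)) H').mpr hH'
      · exact ⟨g * y * g⁻¹, hgy, by simp [MulAut.conj]; group⟩
      · exact ⟨x, hx, by simp [MulAut.conj]⟩
    choose f hf1 hf2 using this
    have hinj : Function.Injective
        (fun g : {g : G // Subgroup.closure {x, g * y * g⁻¹} ≠ ⊤} =>
          (⟨⟨f g, by simpa [hS] using hf1 g⟩, ⟨g.1⁻¹, hf2 g⟩⟩ :
            Σ H : S, {g : G // g * x * g⁻¹ ∈ (H : Subgroup G)})) := by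
      intro g1 g2 h
      have := congrArg (fun p : (Σ H : S, {g : G // g * x * g⁻¹ ∈ (H : Subgroup G)}) =>
        (p.2 : G)) h
      simp only at this
      exact Subtype.ext (inv_injective this)
    exact Nat.card_le_card_of_injective _ hinj
  -- now the real-number arithmetic
  have lhs_eq : (Nat.card {z : G // IsConj y z ∧ Subgroup.closure {x, z} ≠ ⊤} : ℝ) /
      (Nat.card {z : G // IsConj y z} : ℝ) =
      (Nat.card {g : G // Subgroup.closure {x, g * y * g⁻¹} ≠ ⊤} : ℝ) / n := by
    rw [← hA, ← hB]
    push_cast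
    rw [mul_div_mul_right]
    exact_mod_cast hCy0.ne'
  have rhs_eq : ∀ H : Subgroup G,
      (Nat.card {g : G // IsConj x g ∧ g ∈ H} : ℝ) / (Nat.card {g : G // IsConj x g} : ℝ) =
      (Nat.card {g : G // g * x * g⁻¹ ∈ H} : ℝ) / n := by
    intro H
    rw [← ha H, ← hc]
    push_cast
    rw [mul_div_mul_right]
    exact_mod_cast hCx0.ne'
  rw [lhs_eq]
  calc (Nat.card {g : G // Subgroup.closure {x, g * y * g⁻¹} ≠ ⊤} : ℝ) / n
      ≤ (∑ H ∈ S, (Nat.card {g : G // g * x * g⁻¹ ∈ H} : ℕ) : ℝ) / n := by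
        gcongr
        exact_mod_cast key
    _ = ∑ H ∈ S, (Nat.card {g : G // IsConj x g ∧ g ∈ H} : ℝ) /
        (Nat.card {g : G // IsConj x g} : ℝ) := by
        rw [Finset.sum_div]
        exact Finset.sum_congr rfl fun H _ => (rhs_eq H).symm
end

section
/- Let p ≥ 3 be a prime and let G = (Z₂)^{p+1} ⋊ Z_p, where the generator of Z_p cyclically permutes the first p coordinates of (Z₂)^{p+1} and fixes the last coordinate. Then H = (Z₂)^{p+1} is a maximal subgroup of G, d(G) = 2, and d(H) = p + 1 = [G:H] + 1. -/
/-- the elementary abelian group `(Z₂)^{p+1}`, with the first `p` coordinates indexed by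
`ZMod p` and one extra last coordinate -/
abbrev ElemAb (p : ℕ) : Type := (ZMod p → ZMod 2) × ZMod 2

/-- the automorphism of `(Z₂)^{p+1}` cyclically shifting the first `p` coordinates by `k`
and fixing the last coordinate -/
def shiftEquiv (p : ℕ) (k : ZMod p) : ElemAb p ≃+ ElemAb p where
  toFun x := (fun i => x.1 (i + k), x.2)
  invFun x := (fun i => x.1 (i - k), x.2)
  left_inv x := by ext i <;> simp
  right_inv x := by ext i <;> simp
  map_add' x y := rfl

/-- the action of `Z_p` on `(Z₂)^{p+1}` cyclically permuting the first `p` coordinates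
and fixing the last one -/
def shiftHom (p : ℕ) :
    Multiplicative (ZMod p) →* MulAut (Multiplicative (ElemAb p)) :=
  MonoidHom.mk' (fun c => AddEquiv.toMultiplicative (shiftEquiv p c.toAdd)) (by
    intro a b
    ext x i
    show x.toAdd.1 (i + (a.toAdd + b.toAdd)) = x.toAdd.1 (i + a.toAdd + b.toAdd)
    rw [add_assoc]
    rfl)

/-- `G = (Z₂)^{p+1} ⋊ Z_p` -/
abbrev ElemAbSd (p : ℕ) : Type :=
  Multiplicative (ElemAb p) ⋊[shiftHom p] Multiplicative (ZMod p)

/-!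
`H` is the kernel of the projection `G → Z_p`, so it has prime index `p` and is maximal.
As an `F₂`-vector space of dimension `p + 1`, `H` needs `p + 1` generators, because a
generating set spans. `G` is not abelian, hence not cyclic, and it is generated by
`a = (e_{p+1}, 1)` and `b = e_1`: since `e_{p+1}` is central, `a² = (0, 2)` generates `Z_p`
(`p` is odd), the `Z_p`-conjugates of `b` are the `e_i` with `i ≤ p`, and
`e_{p+1} = a (0, 1)⁻¹`.
-/

open Multiplicative SemidirectProduct

namespace Subgroup

variable {G : Type*} [Group G]

theorem isCoatom_of_index_prime {H : Subgroup G} (hH : H.index.Prime) : IsCoatom H := by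
  refine ⟨fun htop => hH.ne_one (index_eq_one.mpr htop), fun K hK => ?_⟩
  have hmul := relIndex_mul_index hK.le
  rcases hH.eq_one_or_self_of_dvd K.index (Dvd.intro_left _ hmul) with h1 | hp
  · exact index_eq_one.mp h1
  · rw [hp] at hmul
    have hrel : H.relIndex K = 1 := Nat.eq_of_mul_eq_mul_right hH.pos (hmul.trans (one_mul _).symm)
    exact absurd (relIndex_eq_one.mp hrel) hK.not_ge

theorem two_le_card_of_closure_eq_top {a b : G} (hab : a * b ≠ b * a) {S : Finset G}
    (hS : closure (S : Set G) = ⊤) : 2 ≤ S.card := by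
  by_contra! hcard
  obtain ⟨g, hg⟩ := Finset.card_le_one_iff_subset_singleton.mp (Nat.le_of_lt_succ hcard)
  have hle : closure (S : Set G) ≤ zpowers g := by
    rw [zpowers_eq_closure]
    exact closure_mono (by exact_mod_cast hg)
  obtain ⟨m, rfl⟩ := mem_zpowers_iff.mp (hle (hS ▸ mem_top a))
  obtain ⟨n, rfl⟩ := mem_zpowers_iff.mp (hle (hS ▸ mem_top b))
  exact hab (zpow_mul_comm g m n)

end Subgroup

theorem AddSubgroup.toZModSubmodule_closure {n : ℕ} {M : Type*} [AddCommGroup M]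
    [Module (ZMod n) M] (T : Set M) :
    AddSubgroup.toZModSubmodule n (AddSubgroup.closure T) = Submodule.span (ZMod n) T :=
  le_antisymm (fun _ hx => (AddSubgroup.closure_le (Submodule.span (ZMod n) T).toAddSubgroup).mpr
      Submodule.subset_span hx)
    (Submodule.span_le.mpr AddSubgroup.subset_closure)

theorem Subgroup.closure_eq_top_iff_span_eq_top {n : ℕ} {V : Type*} [AddCommGroup V]
    [Module (ZMod n) V] (S : Set (Multiplicative V)) :
    closure S = ⊤ ↔ Submodule.span (ZMod n) (ofAdd ⁻¹' S) = ⊤ := by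
  rw [← (toAddSubgroup' (A := V)).injective.eq_iff, OrderIso.map_top, toAddSubgroup'_closure,
    ← (AddSubgroup.toZModSubmodule n).injective.eq_iff, OrderIso.map_top,
    AddSubgroup.toZModSubmodule_closure]

theorem Module.Basis.closure_range_ofAdd_eq_top {n : ℕ} {ι V : Type*} [AddCommGroup V]
    [Module (ZMod n) V] (b : Module.Basis ι (ZMod n) V) :
    Subgroup.closure (Set.range (ofAdd ∘ b)) = ⊤ := by
  rw [Subgroup.closure_eq_top_iff_span_eq_top (n := n), Set.range_comp,
    Set.preimage_image_eq _ ofAdd.injective, b.span_eq]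

/-- `d(G)` is the least element of this set. -/
def generatorCards (G : Type*) [Group G] : Set ℕ :=
  {m | ∃ S : Finset G, S.card = m ∧ Subgroup.closure (S : Set G) = ⊤}

theorem MulEquiv.generatorCards_subset {G H : Type*} [Group G] [Group H] (e : G ≃* H) :
    generatorCards G ⊆ generatorCards H := by
  classical
  rintro m ⟨S, rfl, hS⟩
  refine ⟨S.image e, Finset.card_image_of_injective _ e.injective, ?_⟩
  rw [Finset.coe_image, ← MulEquiv.coe_toMonoidHom, ← MonoidHom.map_closure, hS,
    Subgroup.map_top_of_surjective _ e.surjective]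

theorem MulEquiv.generatorCards_eq {G H : Type*} [Group G] [Group H] (e : G ≃* H) :
    generatorCards G = generatorCards H :=
  e.generatorCards_subset.antisymm e.symm.generatorCards_subset

theorem isLeast_generatorCards_multiplicative (q : ℕ) [Fact q.Prime] (V : Type*)
    [AddCommGroup V] [Module (ZMod q) V] [FiniteDimensional (ZMod q) V] :
    IsLeast (generatorCards (Multiplicative V)) (Module.finrank (ZMod q) V) := by
  classical
  constructor
  · let b := Module.finBasis (ZMod q) V
    refine ⟨Finset.univ.image (ofAdd ∘ b), ?_, ?_⟩
    · rw [Finset.card_image_of_injective _ (ofAdd.injective.comp b.injective),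
        Finset.card_univ, Fintype.card_fin]
    · rw [Finset.coe_image, Finset.coe_univ, Set.image_univ, b.closure_range_ofAdd_eq_top]
  · rintro m ⟨S, rfl, hS⟩
    rw [Subgroup.closure_eq_top_iff_span_eq_top (n := q)] at hS
    calc Module.finrank (ZMod q) V
        = Module.finrank (ZMod q) (Submodule.span (ZMod q) (S.image toAdd : Set V)) := by
          rw [Finset.coe_image, Equiv.image_eq_preimage_symm, toAdd_symm_eq, hS, finrank_top]
      _ ≤ (S.image toAdd).card := finrank_span_finset_le_card _
      _ ≤ S.card := Finset.card_image_le

namespace ElemAb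

theorem add_self {p : ℕ} (x : ElemAb p) : x + x = 0 := by
  ext i
  · exact CharTwo.add_self_eq_zero (x.1 i)
  · exact CharTwo.add_self_eq_zero x.2

variable (p : ℕ) [NeZero p]

noncomputable def stdBasis : Module.Basis (ZMod p ⊕ Unit) (ZMod 2) (ElemAb p) :=
  (Pi.basisFun (ZMod 2) (ZMod p)).prod (Module.Basis.singleton Unit (ZMod 2))

theorem finrank_eq : Module.finrank (ZMod 2) (ElemAb p) = p + 1 := by
  have : Fact (Nat.Prime 2) := ⟨Nat.prime_two⟩
  rw [Module.finrank_prod, Module.finrank_pi, Module.finrank_self, ZMod.card]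

variable {p}

theorem shiftEquiv_stdBasis_inl (c j : ZMod p) :
    shiftEquiv p c (stdBasis p (.inl j)) = stdBasis p (.inl (j - c)) := by
  ext i
  · simp [stdBasis, shiftEquiv, Pi.single_apply, eq_sub_iff_add_eq]
  · simp [stdBasis, shiftEquiv]

theorem shiftEquiv_stdBasis_inr (c : ZMod p) (u : Unit) :
    shiftEquiv p c (stdBasis p (.inr u)) = stdBasis p (.inr u) := by
  ext i <;> simp [stdBasis, shiftEquiv]

end ElemAb

theorem SemidirectProduct.index_range_inl {N G : Type*} [Group N] [Group G]
    {φ : G →* MulAut N} : (inl : N →* N ⋊[φ] G).range.index = Nat.card G := by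
  rw [range_inl_eq_ker_rightHom, Subgroup.index_ker,
    MonoidHom.range_eq_top_of_surjective _ rightHom_surjective, Subgroup.card_top]

namespace ElemAbSd

open ElemAb

theorem shiftHom_ofAdd {p : ℕ} (c : ZMod p) (x : ElemAb p) :
    shiftHom p (ofAdd c) (ofAdd x) = ofAdd (shiftEquiv p c x) := rfl

variable (p : ℕ) [Fact p.Prime]

noncomputable def genA : ElemAbSd p := inl (ofAdd (stdBasis p (.inr ()))) * inr (ofAdd 1)

noncomputable def genB : ElemAbSd p := inl (ofAdd (stdBasis p (.inl 0)))

variable {p}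

theorem commute_inl_stdBasis_inr (u : Unit) (g : Multiplicative (ZMod p)) :
    Commute (inl (ofAdd (stdBasis p (.inr u))) : ElemAbSd p) (inr g) := by
  have h := inl_aut (φ := shiftHom p) g (ofAdd (stdBasis p (.inr u)))
  rw [← ofAdd_toAdd g, shiftHom_ofAdd, shiftEquiv_stdBasis_inr, map_inv] at h
  exact (mul_inv_eq_iff_eq_mul.mp h.symm).symm

theorem genA_sq : genA p ^ 2 = inr (ofAdd 2) := by
  rw [genA, (commute_inl_stdBasis_inr () _).mul_pow, ← map_pow (inl : _ →* ElemAbSd p),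
    ← map_pow (inr : _ →* ElemAbSd p), ← ofAdd_nsmul, ← ofAdd_nsmul, two_nsmul, add_self,
    two_nsmul, one_add_one_eq_two, ofAdd_zero, map_one, one_mul]

theorem inr_mul_genB_ne : (inr (ofAdd 1) * genB p : ElemAbSd p) ≠ genB p * inr (ofAdd 1) := by
  intro h
  have hleft := congrArg (fun x => toAdd x.left) h
  simp only [genB, mul_left, left_inr, left_inl, right_inr, one_mul, mul_one, shiftHom_ofAdd,
    toAdd_ofAdd, map_one, shiftEquiv_stdBasis_inl] at hleft
  have : (0 : ZMod p) - 1 = 0 := Sum.inl_injective ((stdBasis p).injective hleft)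
  simp at this

theorem genA_ne_genB : genA p ≠ genB p := by
  intro h
  have hright := congrArg (fun x => toAdd x.right) h
  simp [genA, genB] at hright

theorem closure_genA_genB (hp2 : p ≠ 2) :
    Subgroup.closure ({genA p, genB p} : Set (ElemAbSd p)) = ⊤ := by
  set K := Subgroup.closure ({genA p, genB p} : Set (ElemAbSd p))
  have hA : genA p ∈ K := Subgroup.subset_closure (by simp)
  have hB : genB p ∈ K := Subgroup.subset_closure (by simp)
  have h2 : (2 : ZMod p) ≠ 0 := Ring.two_ne_zero (by rwa [ZMod.ringChar_zmod_n])
  have hinr (g : Multiplicative (ZMod p)) : inr g ∈ K := by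
    have hg : inr g = (genA p ^ 2) ^ (2⁻¹ * toAdd g).val := by
      rw [genA_sq, ← map_pow, ← ofAdd_nsmul, nsmul_eq_mul, ZMod.natCast_zmod_val,
        mul_comm, ← mul_assoc, mul_inv_cancel₀ h2, one_mul, ofAdd_toAdd]
    exact hg ▸ pow_mem (pow_mem hA 2) _
  have hbasis (i : ZMod p ⊕ Unit) : inl (ofAdd (stdBasis p i)) ∈ K := by
    rcases i with j | u
    · have h := inl_aut (φ := shiftHom p) (ofAdd (-j)) (ofAdd (stdBasis p (.inl 0)))
      rw [shiftHom_ofAdd, shiftEquiv_stdBasis_inl, zero_sub, neg_neg] at h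
      exact h ▸ mul_mem (mul_mem (hinr _) hB) (hinr _)
    · have h : inl (ofAdd (stdBasis p (.inr u))) = genA p * (inr (ofAdd 1))⁻¹ :=
        (mul_inv_cancel_right _ _).symm
      exact h ▸ mul_mem hA (inv_mem (hinr _))
  have hinl : (inl : _ →* ElemAbSd p).range ≤ K := by
    rw [MonoidHom.range_eq_map, ← (stdBasis p).closure_range_ofAdd_eq_top,
      Subgroup.map_le_iff_le_comap, Subgroup.closure_le]
    rintro _ ⟨i, rfl⟩
    exact hbasis i
  rw [eq_top_iff]
  rintro g -
  rw [← inl_left_mul_inr_right g]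
  exact mul_mem (hinl ⟨_, rfl⟩) (hinr _)

theorem isLeast_generatorCards (hp2 : p ≠ 2) : IsLeast (generatorCards (ElemAbSd p)) 2 := by
  classical
  exact ⟨⟨{genA p, genB p}, Finset.card_pair genA_ne_genB, by
      rw [Finset.coe_pair]
      exact closure_genA_genB hp2⟩,
    fun _ ⟨_, hcard, hS⟩ =>
      hcard ▸ Subgroup.two_le_card_of_closure_eq_top inr_mul_genB_ne hS⟩

end ElemAbSd

/-- In `G = (Z₂)^{p+1} ⋊ Z_p` (with `p ≥ 3` prime, `Z_p` cyclically permuting the first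
`p` coordinates), the subgroup `H = (Z₂)^{p+1}` is maximal, `d(G) = 2` and
`d(H) = p + 1 = [G:H] + 1`. -/
theorem stmt_8 (p : ℕ) (hp : p.Prime) (hp3 : 3 ≤ p) :
    IsCoatom (SemidirectProduct.inl.range : Subgroup (ElemAbSd p)) ∧
    (SemidirectProduct.inl.range : Subgroup (ElemAbSd p)).index = p ∧
    IsLeast {m | ∃ S : Finset (ElemAbSd p),
      S.card = m ∧ Subgroup.closure (S : Set (ElemAbSd p)) = ⊤} 2 ∧
    IsLeast {m | ∃ S : Finset (SemidirectProduct.inl.range : Subgroup (ElemAbSd p)),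
      S.card = m ∧ Subgroup.closure (S : Set (SemidirectProduct.inl.range : Subgroup (ElemAbSd p))) = ⊤}
      (p + 1) := by
  have : Fact p.Prime := ⟨hp⟩
  have hindex : (inl.range : Subgroup (ElemAbSd p)).index = p := by
    rw [index_range_inl, Nat.card_congr toAdd, Nat.card_zmod]
  refine ⟨Subgroup.isCoatom_of_index_prime (hindex.symm ▸ hp), hindex,
    ElemAbSd.isLeast_generatorCards (by omega), ?_⟩
  change IsLeast (generatorCards _) _
  rw [(MonoidHom.ofInjective inl_injective).symm.generatorCards_eq, ← ElemAb.finrank_eq p]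
  exact isLeast_generatorCards_multiplicative 2 _
end

section
/- For all integers 1 ≤ k < n, the direct product S_k × S_{n−k} of symmetric groups (with k ≥ 2 and n−k ≥ 2) can be generated by two elements. Specifically, it is generated by ((1,2), x) and (y, (1,2)), where x is the cycle (α, α+1, …, n−k) with α = 1 if n−k is odd and α = 2 otherwise, and y is the cycle (β, β+1, …, k) with β = 1 if k is odd and β = 2 otherwise. -/
/-!
Write `s`, `t` for the transpositions and `x`, `y` for the cycles. Both cycles have odd
length, so `(s, x) ^ orderOf x = (s, 1)` and `(y, t) ^ orderOf y = (1, t)`; dividing these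
out of the generators gives `(1, x)` and `(y, 1)` as well. It remains that a transposition
`(1 2)` and the cycle generate `S_m`: for odd `m` the cycle is a full `m`-cycle sending `1`
to `2`, and for even `m` it fixes `1` and is transitive on the other points, so conjugating
`(1 2)` by its powers gives every transposition `(1 j)`.
-/

open Equiv Equiv.Perm List Subgroup

section Product

variable {G H : Type*} [Group G] [Group H]

theorem pow_eq_self_of_sq_eq_one_of_odd {g : G} (hg : g ^ 2 = 1) {r : ℕ} (hr : Odd r) :
    g ^ r = g := by
  obtain ⟨c, rfl⟩ := hr
  rw [pow_succ, pow_mul, hg, one_pow, one_mul]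

theorem Subgroup.closure_pair_prod_eq_top {s y : G} {t x : H} (hG : closure {s, y} = ⊤)
    (hH : closure {t, x} = ⊤) (hs : s ^ 2 = 1) (ht : t ^ 2 = 1) (hx : Odd (orderOf x))
    (hy : Odd (orderOf y)) : closure {(s, x), (y, t)} = ⊤ := by
  set C := closure {(s, x), (y, t)}
  have hsx : (s, x) ∈ C := subset_closure (Set.mem_insert _ _)
  have hyt : (y, t) ∈ C := subset_closure (Set.mem_insert_of_mem _ (Set.mem_singleton _))
  have hs1 : (s, (1 : H)) ∈ C := by
    simpa [pow_eq_self_of_sq_eq_one_of_odd hs hx] using C.pow_mem hsx (orderOf x)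
  have ht1 : ((1 : G), t) ∈ C := by
    simpa [pow_eq_self_of_sq_eq_one_of_odd ht hy] using C.pow_mem hyt (orderOf y)
  have hx1 : ((1 : G), x) ∈ C := (mul_mem_cancel_left hs1).1 (by simpa using hsx)
  have hy1 : (y, (1 : H)) ∈ C := (mul_mem_cancel_right ht1).1 (by simpa using hyt)
  rw [eq_top_iff, ← top_prod_top, prod_le_iff, ← hG, ← hH, MonoidHom.map_closure,
    MonoidHom.map_closure, closure_le, closure_le, Set.image_pair, Set.image_pair]
  exact ⟨Set.pair_subset hs1 hy1, Set.pair_subset ht1 hx1⟩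

end Product

section FormPerm

variable {α : Type*} [DecidableEq α] {l : List α}

theorem List.sameCycle_formPerm (hl : l.Nodup) {x y : α} (hx : x ∈ l) (hy : y ∈ l) :
    l.formPerm.SameCycle x y := by
  obtain ⟨i, hi, rfl⟩ := getElem_of_mem hx
  obtain ⟨j, hj, rfl⟩ := getElem_of_mem hy
  refine ⟨(l.length - i + j : ℕ), ?_⟩
  rw [zpow_natCast, formPerm_pow_apply_getElem _ hl]
  simp only [show i + (l.length - i + j) = j + l.length by omega, Nat.add_mod_right,
    Nat.mod_eq_of_lt hj]

theorem List.odd_orderOf_formPerm (hl : l.Nodup) (hodd : Odd l.length) :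
    Odd (orderOf l.formPerm) :=
  hodd.of_dvd_nat (orderOf_dvd_of_pow_eq_one (formPerm_pow_length_eq_one_of_nodup _ hl))

end FormPerm

namespace Equiv.Perm

section Generation

variable {α : Type*} [DecidableEq α] [Finite α]

theorem eq_top_of_forall_swap_mem {H : Subgroup (Perm α)} (a : α) (h : ∀ j, swap a j ∈ H) :
    H = ⊤ := by
  rw [eq_top_iff, ← closure_isSwap, closure_le]
  rintro _ ⟨x, y, -, rfl⟩
  have hx : swap x a ∈ H := by
    rw [swap_comm]
    exact h x
  exact SubmonoidClass.swap_mem_trans H hx (h y)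

theorem closure_swap_eq_top_of_sameCycle {c : Perm α} {a b : α} (ha : c a = a)
    (hc : ∀ j ≠ a, c.SameCycle b j) : closure {swap a b, c} = ⊤ := by
  refine eq_top_of_forall_swap_mem a fun j => ?_
  obtain rfl | hj := eq_or_ne j a
  · rw [swap_self]
    exact one_mem _
  obtain ⟨i, rfl⟩ := hc j hj
  have hconj : swap a ((c ^ i) b) = c ^ i * swap a b * (c ^ i)⁻¹ := by
    rw [← swap_apply_apply, zpow_apply_eq_self_of_apply_eq_self ha]
  have hswap : swap a b ∈ closure {swap a b, c} := subset_closure (Set.mem_insert _ _)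
  have hci : c ^ i ∈ closure {swap a b, c} :=
    zpow_mem (subset_closure (Set.mem_insert_of_mem _ (Set.mem_singleton c))) i
  rw [hconj]
  exact mul_mem (mul_mem hci hswap) (inv_mem hci)

end Generation

/-- The cycle `(α, α+1, …, m)` of the statement, shifted to `Fin m`: it runs through all of
`Fin m` when `m` is odd and through all points but `0` when `m` is even, so its length is odd. -/
def finOddCycle (m : ℕ) : Perm (Fin m) :=
  if Odd m then formPerm (finRange m) else formPerm ((finRange m).drop 1)

theorem odd_orderOf_finOddCycle (m : ℕ) : Odd (orderOf (finOddCycle m)) := by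
  rw [finOddCycle]
  split_ifs with hodd
  · exact odd_orderOf_formPerm (nodup_finRange m) (by simpa using hodd)
  obtain rfl | hm := eq_or_ne m 0
  · simp
  refine odd_orderOf_formPerm ((nodup_finRange m).sublist (drop_sublist 1 _)) ?_
  obtain ⟨c, hc⟩ := Nat.not_odd_iff_even.1 hodd
  rw [length_drop, length_finRange]
  exact ⟨c - 1, by omega⟩

theorem closure_swap_finOddCycle {m : ℕ} (hm : 2 ≤ m) :
    closure {swap (⟨0, by omega⟩ : Fin m) ⟨1, by omega⟩, finOddCycle m} = ⊤ := by
  obtain ⟨m, rfl⟩ : ∃ m', m = m' + 2 := ⟨m - 2, by omega⟩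
  simp only [Fin.zero_eta, Fin.mk_one, finOddCycle]
  split_ifs with hodd
  · have hcyc : (finRange (m + 2)).formPerm.IsCycle :=
      isCycle_formPerm (nodup_finRange _) (by simp)
    have hsupp : (finRange (m + 2)).formPerm.support = Finset.univ := by
      rw [support_formPerm_of_nodup _ (nodup_finRange _)
        fun x h => by simpa using congrArg length h, toFinset_finRange]
    have h01 : (finRange (m + 2)).formPerm 0 = 1 := by
      simpa using formPerm_apply_getElem _ (nodup_finRange (m + 2)) 0 (by simp)
    rw [Set.pair_comm, ← h01]
    exact closure_cycle_adjacent_swap hcyc hsupp 0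
  · rw [finRange_succ, drop_succ_cons, drop_zero]
    have hl := (nodup_finRange (m + 1)).map (Fin.succ_injective _)
    have hmem : ∀ j : Fin (m + 2), j ≠ 0 → j ∈ (finRange (m + 1)).map Fin.succ := by
      simp
    exact closure_swap_eq_top_of_sameCycle (formPerm_apply_of_notMem (by simp))
      fun j hj => sameCycle_formPerm hl (hmem 1 one_ne_zero) (hmem j hj)

end Equiv.Perm

theorem stmt_9 (n k : ℕ) (hk : 2 ≤ k) (hnk : 2 ≤ n - k) :
    Subgroup.closure
      {((Equiv.swap (⟨0, by omega⟩ : Fin k) ⟨1, by omega⟩,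
          if Odd (n - k) then List.formPerm (List.finRange (n - k))
          else List.formPerm ((List.finRange (n - k)).drop 1)) :
            Equiv.Perm (Fin k) × Equiv.Perm (Fin (n - k))),
       ((if Odd k then List.formPerm (List.finRange k)
          else List.formPerm ((List.finRange k).drop 1)),
         Equiv.swap (⟨0, by omega⟩ : Fin (n - k)) ⟨1, by omega⟩)} = ⊤ :=
  closure_pair_prod_eq_top (closure_swap_finOddCycle hk) (closure_swap_finOddCycle hnk)
    ((sq _).trans (swap_mul_self _ _)) ((sq _).trans (swap_mul_self _ _))
    (odd_orderOf_finOddCycle _) (odd_orderOf_finOddCycle _)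
end

section
/- For integers k ≥ 2 and t ≥ 2, the wreath product S_k ≀ S_t is 2-generated, i.e., d(S_k ≀ S_t) = 2. -/
/-!
Let `v` be the standard `k`-cycle, `γ` the standard `t`-cycle, `u = (0 1) v^(t-1)`, and take
`x = (u, 1, …, 1; γ)` and `y = (v, 1, …, 1; (0 1))`. Then `x^t = (u, …, u; 1)`, and since `(0 1) γ`
fixes `0` and cycles the other `t - 1` points, `(yx)^(t-1) = (v^(t-1), u, …, u; 1)`; so
`(yx)^(t-1) x^(-t) = ((0 1), 1, …, 1; 1)`. Conjugation by `x^t` and `y² = (v, v, 1, …, 1; 1)` shows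
that the `b` with `(b, 1, …, 1; 1) ∈ ⟨x, y⟩` form a subgroup normalized by `⟨u, v⟩ = S_k`; it
contains a transposition, hence is all of `S_k`. As `γ` and `(0 1)` generate `S_t`, `⟨x, y⟩` is
the whole wreath product. A one-generated group is abelian and `S_k ≀ S_t` is not.
-/

/-- the automorphism of `(S_k)^t` given by permuting the `t` coordinates by `σ` -/
def wreathAut (k t : ℕ) (σ : Equiv.Perm (Fin t)) :
    (Fin t → Equiv.Perm (Fin k)) ≃* (Fin t → Equiv.Perm (Fin k)) where
  toFun f := f ∘ σ.symm
  invFun f := f ∘ σ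
  left_inv f := by ext i : 1; simp
  right_inv f := by ext i : 1; simp
  map_mul' f g := rfl

/-- the action homomorphism `S_t →* Aut((S_k)^t)` defining the wreath product `S_k ≀ S_t` -/
def wreathPhi (k t : ℕ) : Equiv.Perm (Fin t) →* MulAut (Fin t → Equiv.Perm (Fin k)) :=
  MonoidHom.mk' (fun σ => wreathAut k t σ) (by
    intro σ τ
    ext f i
    rfl)

/-- the wreath product `S_k ≀ S_t` -/
abbrev WreathSS (k t : ℕ) : Type :=
  (Fin t → Equiv.Perm (Fin k)) ⋊[wreathPhi k t] Equiv.Perm (Fin t)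

open Equiv Equiv.Perm SemidirectProduct

namespace SemidirectProduct

variable {N G : Type*} [Group N] [Group G] {φ : G →* MulAut N}

theorem pow_right (g : N ⋊[φ] G) (n : ℕ) : (g ^ n).right = g.right ^ n := by
  simpa using map_pow rightHom g n

theorem pow_left (g : N ⋊[φ] G) (n : ℕ) :
    (g ^ n).left = ((List.range n).map fun i => φ (g.right ^ i) g.left).prod := by
  induction n with
  | zero => simp
  | succ n ih => simp [pow_succ, ih, pow_right, List.range_succ]

theorem conj_inl (g : N ⋊[φ] G) (n : N) :
    g * inl n * g⁻¹ = inl (g.left * φ g.right n * g.left⁻¹) := by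
  ext <;> simp [mul_left, inv_left]

end SemidirectProduct

theorem Pi.mul_mulSingle_mul_inv {ι : Type*} [DecidableEq ι] {M : ι → Type*} [∀ i, Group (M i)]
    (f : ∀ i, M i) (i : ι) (b : M i) :
    f * Pi.mulSingle i b * f⁻¹ = Pi.mulSingle i (f i * b * (f i)⁻¹) := by
  ext j
  by_cases h : j = i
  · subst h
    simp
  · simp [h]

theorem wreathPhi_apply {k t : ℕ} (σ : Perm (Fin t)) (f : Fin t → Perm (Fin k)) (i : Fin t) :
    wreathPhi k t σ f i = f (σ⁻¹ i) := rfl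

theorem wreathPhi_mulSingle {k t : ℕ} (σ : Perm (Fin t)) (j : Fin t) (b : Perm (Fin k)) :
    wreathPhi k t σ (Pi.mulSingle j b) = Pi.mulSingle (σ j) b := by
  ext1 i
  simp [wreathPhi_apply, Pi.mulSingle_apply, symm_apply_eq]

namespace WreathSS

variable {k t : ℕ}

theorem pow_left_apply (g : WreathSS k t) (n : ℕ) (j : Fin t) :
    (g ^ n).left j = ((List.range n).map fun i => g.left ((g.right ^ i)⁻¹ j)).prod := by
  rw [pow_left, Pi.list_prod_apply, List.map_map]
  rfl

theorem pow_left_apply_of_apply_eq_self {g : WreathSS k t} {j : Fin t} (hj : g.right j = j)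
    (n : ℕ) : (g ^ n).left j = g.left j ^ n := by
  have hfix (i : ℕ) : (g.right ^ i)⁻¹ j = j := by
    rw [inv_eq_iff_eq, pow_apply_eq_self_of_apply_eq_self hj]
  simp [pow_left_apply, hfix]

theorem pow_left_apply_of_unique {g : WreathSS k t} {n i₀ : ℕ} {j : Fin t} (hi₀ : i₀ < n)
    (hg : ∀ i < n, i ≠ i₀ → g.left ((g.right ^ i)⁻¹ j) = 1) :
    (g ^ n).left j = g.left ((g.right ^ i₀)⁻¹ j) := by
  rw [pow_left_apply,
    List.prod_map_eq_pow_single i₀ _ fun i hi hmem => hg i (by simpa using hmem) hi,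
    List.count_eq_one_of_mem List.nodup_range (by simpa using hi₀), pow_one]

theorem conj_inl_mulSingle (g : WreathSS k t) (j : Fin t) (b : Perm (Fin k)) :
    g * inl (Pi.mulSingle j b) * g⁻¹ =
      inl (Pi.mulSingle (g.right j) (g.left (g.right j) * b * (g.left (g.right j))⁻¹)) := by
  rw [conj_inl, wreathPhi_mulSingle, Pi.mul_mulSingle_mul_inv]

def coordSubgroup (H : Subgroup (WreathSS k t)) (j : Fin t) : Subgroup (Perm (Fin k)) :=
  H.comap (inl.comp (MonoidHom.mulSingle (fun _ => Perm (Fin k)) j))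

theorem mem_coordSubgroup {H : Subgroup (WreathSS k t)} {j : Fin t} {b : Perm (Fin k)} :
    b ∈ coordSubgroup H j ↔ inl (Pi.mulSingle j b) ∈ H :=
  Iff.rfl

theorem eq_top_of_coordSubgroup_eq_top {H : Subgroup (WreathSS k t)} {j : Fin t}
    (hright : H.map rightHom = ⊤) (hcoord : coordSubgroup H j = ⊤) : H = ⊤ := by
  have hsingle (i : Fin t) (b : Perm (Fin k)) : inl (Pi.mulSingle i b) ∈ H := by
    obtain ⟨g, hg, hgj⟩ : ∃ g ∈ H, g.right = swap j i := by
      simpa using hright.ge (Subgroup.mem_top (swap j i))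
    have hconj := conj_inl_mulSingle g j ((g.left i)⁻¹ * b * g.left i)
    have hb' : g.left i * ((g.left i)⁻¹ * b * g.left i) * (g.left i)⁻¹ = b := by group
    rw [hgj, swap_apply_left, hb'] at hconj
    have hb : inl (Pi.mulSingle j ((g.left i)⁻¹ * b * g.left i)) ∈ H :=
      mem_coordSubgroup.mp (hcoord.ge (Subgroup.mem_top _))
    rw [← hconj]
    exact H.mul_mem (H.mul_mem hg hb) (H.inv_mem hg)
  have hbase : rightHom.ker ≤ H := by
    rw [← range_inl_eq_ker_rightHom]
    rintro _ ⟨f, rfl⟩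
    exact Subgroup.pi_mem_of_mulSingle_mem (H := H.comap inl) f fun i => hsingle i (f i)
  rw [← sup_eq_left.mpr hbase, ← Subgroup.comap_map_eq, hright, Subgroup.comap_top]

theorem conj_mem_coordSubgroup {H : Subgroup (WreathSS k t)} {j : Fin t}
    {f : Fin t → Perm (Fin k)} (hf : inl f ∈ H) {b : Perm (Fin k)} (hb : b ∈ coordSubgroup H j) :
    f j * b * (f j)⁻¹ ∈ coordSubgroup H j := by
  have hconj := conj_inl_mulSingle (inl f) j b
  simp only [right_inl, one_apply, left_inl] at hconj
  rw [mem_coordSubgroup, ← hconj]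
  exact H.mul_mem (H.mul_mem hf hb) (H.inv_mem hf)

theorem coordSubgroup_normal {H : Subgroup (WreathSS k t)} {j : Fin t}
    (h : (H.comap inl).map (Pi.evalMonoidHom _ j) = ⊤) : (coordSubgroup H j).Normal where
  conj_mem b hb c := by
    obtain ⟨f, hf, rfl⟩ := h.ge (Subgroup.mem_top c)
    exact conj_mem_coordSubgroup hf hb

end WreathSS

theorem Equiv.Perm.eq_top_of_normal_of_swap_mem {α : Type*} [DecidableEq α] [Finite α]
    {N : Subgroup (Perm α)} (hN : N.Normal) {a b : α} (hab : a ≠ b) (h : swap a b ∈ N) :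
    N = ⊤ := by
  rw [eq_top_iff, ← closure_isSwap, Subgroup.closure_le]
  rintro _ ⟨c, d, hcd, rfl⟩
  obtain ⟨g, hg⟩ := isConj_iff.mp (isConj_swap hab hcd)
  rw [← hg]
  exact hN.conj_mem _ h g

theorem Subgroup.two_le_card_of_closure_eq_top_s10 {G : Type*} [Group G] {a b : G}
    (hab : ¬Commute a b) {S : Finset G} (hS : closure (S : Set G) = ⊤) : 2 ≤ S.card := by
  by_contra! hcard
  obtain ⟨g, hg⟩ := Finset.card_le_one_iff_subset_singleton.mp (Nat.le_of_lt_succ hcard)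
  have hcyclic (x : G) : x ∈ zpowers g := by
    rw [zpowers_eq_closure, ← Finset.coe_singleton]
    exact closure_mono (Finset.coe_subset.mpr hg) (hS.ge (mem_top x))
  obtain ⟨m, rfl⟩ := mem_zpowers_iff.mp (hcyclic a)
  obtain ⟨n, rfl⟩ := mem_zpowers_iff.mp (hcyclic b)
  exact hab (Commute.zpow_zpow_self g m n)

theorem val_finRotate_pow_apply (n i : ℕ) (j : Fin (n + 1)) :
    ((finRotate (n + 1) ^ i) j : ℕ) = (j + i) % (n + 1) := by
  induction i with
  | zero => simp [Nat.mod_eq_of_lt j.isLt]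
  | succ i ih => simp [pow_succ', Fin.val_add, ih, Nat.add_mod, ← add_assoc]

theorem finRotate_pow_self (n : ℕ) : finRotate (n + 1) ^ (n + 1) = 1 := by
  ext j
  simp [val_finRotate_pow_apply, Nat.mod_eq_of_lt j.isLt]

theorem swap_mul_finRotate_apply_zero (n : ℕ) :
    (swap 0 1 * finRotate (n + 2) : Perm (Fin (n + 2))) 0 = 0 := by
  simp [finRotate_apply]

theorem swap_mul_finRotate_apply_succ (n : ℕ) (j : Fin (n + 1)) :
    (swap 0 1 * finRotate (n + 2) : Perm (Fin (n + 2))) j.succ = (finRotate (n + 1) j).succ := by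
  simp [finRotate_succ_eq_decomposeFin]

theorem swap_mul_finRotate_pow_apply_succ (n i : ℕ) (j : Fin (n + 1)) :
    ((swap 0 1 * finRotate (n + 2) : Perm (Fin (n + 2))) ^ i) j.succ =
      ((finRotate (n + 1) ^ i) j).succ := by
  induction i with
  | zero => rfl
  | succ i ih =>
    rw [pow_succ', mul_apply, ih, swap_mul_finRotate_apply_succ, ← mul_apply, ← pow_succ']

theorem swap_mul_finRotate_pow_succ_self (n : ℕ) :
    (swap 0 1 * finRotate (n + 2) : Perm (Fin (n + 2))) ^ (n + 1) = 1 := by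
  ext j : 1
  induction j using Fin.cases with
  | zero => exact pow_apply_eq_self_of_apply_eq_self (swap_mul_finRotate_apply_zero n) _
  | succ j => rw [swap_mul_finRotate_pow_apply_succ, finRotate_pow_self]; rfl

theorem finRotate_pow_apply_zero {n i : ℕ} (hi : i < n + 1) :
    (finRotate (n + 1) ^ i) 0 = ⟨i, hi⟩ := by
  ext
  simp [val_finRotate_pow_apply, Nat.mod_eq_of_lt hi]

namespace WreathSS

section Generators

-- `k` and `t` stand for `k - 2` and `t - 2` of the informal statement.
variable (k t : ℕ)

def genXBase : Perm (Fin (k + 2)) := swap 0 1 * finRotate (k + 2) ^ (t + 1)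

def genX : WreathSS (k + 2) (t + 2) := ⟨Pi.mulSingle 0 (genXBase k t), finRotate (t + 2)⟩

def genY : WreathSS (k + 2) (t + 2) := ⟨Pi.mulSingle 0 (finRotate (k + 2)), swap 0 1⟩

theorem closure_genXBase_finRotate : Subgroup.closure {genXBase k t, finRotate (k + 2)} = ⊤ := by
  rw [eq_top_iff, ← closure_cycle_adjacent_swap isCycle_finRotate support_finRotate 0,
    Subgroup.closure_le, Set.insert_subset_iff, Set.singleton_subset_iff]
  have hv : finRotate (k + 2) ∈ Subgroup.closure {genXBase k t, finRotate (k + 2)} :=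
    Subgroup.subset_closure (by simp)
  refine ⟨hv, ?_⟩
  have hu : genXBase k t ∈ Subgroup.closure {genXBase k t, finRotate (k + 2)} :=
    Subgroup.subset_closure (by simp)
  have hswap : swap 0 (finRotate (k + 2) 0) = genXBase k t * (finRotate (k + 2) ^ (t + 1))⁻¹ := by
    simp [genXBase, finRotate_apply]
  rw [hswap]
  exact mul_mem hu (inv_mem (pow_mem hv _))

theorem genX_pow : genX k t ^ (t + 2) = inl fun _ => genXBase k t := by
  ext j : 2
  · rw [pow_left_apply_of_unique (i₀ := j) j.isLt] <;> dsimp only [genX]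
    · rw [(inv_eq_iff_eq.mpr (finRotate_pow_apply_zero j.isLt).symm : _ = (0 : Fin (t + 2))),
        Pi.mulSingle_eq_same]
      rfl
    · intro i hi hij
      refine Pi.mulSingle_eq_of_ne ?_ _
      rw [Ne, inv_eq_iff_eq, finRotate_pow_apply_zero hi]
      exact fun h => hij (congrArg Fin.val h).symm
  · simp [pow_right, genX, finRotate_pow_self]

theorem genY_sq :
    genY k t ^ 2 =
      inl (Pi.mulSingle 0 (finRotate (k + 2)) * Pi.mulSingle 1 (finRotate (k + 2))) := by
  ext : 1
  · simp [sq, genY, wreathPhi_mulSingle]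
  · simp [sq, genY]

theorem genY_mul_genX : genY k t * genX k t =
    ⟨Pi.mulSingle 0 (finRotate (k + 2)) * Pi.mulSingle 1 (genXBase k t),
      swap 0 1 * finRotate (t + 2)⟩ := by
  ext : 1
  · simp [genX, genY, wreathPhi_mulSingle]
  · rfl

theorem genY_mul_genX_pow : (genY k t * genX k t) ^ (t + 1) =
    inl fun j => if j = 0 then finRotate (k + 2) ^ (t + 1) else genXBase k t := by
  rw [genY_mul_genX]
  ext j : 2
  · induction j using Fin.cases with
    | zero =>
      rw [pow_left_apply_of_apply_eq_self (swap_mul_finRotate_apply_zero t)]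
      simp
    | succ j =>
      have hfix (i : ℕ) :
          ((swap 0 1 * finRotate (t + 2) : Perm (Fin (t + 2))) ^ i)⁻¹ j.succ ≠ 0 := by
        rw [Ne, inv_eq_iff_eq, pow_apply_eq_self_of_apply_eq_self (swap_mul_finRotate_apply_zero t)]
        exact Fin.succ_ne_zero j
      have horbit (i : ℕ) (hi : i < t + 1) :
          ((swap 0 1 * finRotate (t + 2) : Perm (Fin (t + 2))) ^ i) 1 =
            (⟨i, hi⟩ : Fin (t + 1)).succ := by
        have h := swap_mul_finRotate_pow_apply_succ t i 0
        rwa [finRotate_pow_apply_zero hi, Fin.succ_zero_eq_one] at h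
      rw [pow_left_apply_of_unique (i₀ := j) j.isLt]
      · dsimp only
        rw [(inv_eq_iff_eq.mpr (horbit j j.isLt).symm : _ = (1 : Fin (t + 2)))]
        simp
      · intro i hi hij
        dsimp only
        rw [Pi.mul_apply, Pi.mulSingle_eq_of_ne (hfix i), Pi.mulSingle_eq_of_ne, one_mul]
        rw [Ne, inv_eq_iff_eq, horbit i hi, Fin.succ_inj]
        exact fun h => hij (congrArg Fin.val h).symm
  · simp [pow_right, swap_mul_finRotate_pow_succ_self]

theorem genY_mul_genX_pow_mul_inv_genX_pow :
    (genY k t * genX k t) ^ (t + 1) * (genX k t ^ (t + 2))⁻¹ =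
      inl (Pi.mulSingle (0 : Fin (t + 2)) (swap 0 1 : Perm (Fin (k + 2)))) := by
  rw [genY_mul_genX_pow, genX_pow, ← map_inv, ← map_mul]
  congr 1
  ext1 j
  by_cases hj : j = 0
  · simp [hj, genXBase]
  · simp [hj]

theorem not_commute_inl_inr :
    ¬Commute (inl (Pi.mulSingle 0 (swap 0 1)) : WreathSS (k + 2) (t + 2)) (inr (swap 0 1)) := by
  intro h
  have hconj := inl_aut (φ := wreathPhi (k + 2) (t + 2)) (swap 0 1) (Pi.mulSingle 0 (swap 0 1))
  rw [← h.eq, mul_assoc, ← map_mul, mul_inv_cancel, map_one, mul_one, inl_inj,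
    wreathPhi_mulSingle, swap_apply_left] at hconj
  have := congrFun hconj 1
  simp at this

theorem closure_genX_genY : Subgroup.closure {genX k t, genY k t} = ⊤ := by
  set H := Subgroup.closure {genX k t, genY k t}
  have hx : genX k t ∈ H := Subgroup.subset_closure (by simp)
  have hy : genY k t ∈ H := Subgroup.subset_closure (by simp)
  have hright : H.map rightHom = ⊤ := by
    rw [MonoidHom.map_closure, Set.image_pair]
    exact closure_cycle_adjacent_swap isCycle_finRotate support_finRotate 0
  have hswap : swap 0 1 ∈ coordSubgroup H 0 := by
    rw [mem_coordSubgroup, ← genY_mul_genX_pow_mul_inv_genX_pow]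
    exact H.mul_mem (H.pow_mem (H.mul_mem hy hx) _) (H.inv_mem (H.pow_mem hx _))
  have hnormal : (coordSubgroup H 0).Normal := by
    refine coordSubgroup_normal (eq_top_iff.mpr ?_)
    rw [← closure_genXBase_finRotate k t, Subgroup.closure_le, Set.insert_subset_iff,
      Set.singleton_subset_iff]
    exact ⟨⟨_, (genX_pow k t).subst (H.pow_mem hx _), rfl⟩,
      ⟨_, (genY_sq k t).subst (H.pow_mem hy 2), by simp⟩⟩
  exact eq_top_of_coordSubgroup_eq_top hright
    (eq_top_of_normal_of_swap_mem hnormal zero_ne_one hswap)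

end Generators

end WreathSS

theorem stmt_10 (k t : ℕ) (hk : 2 ≤ k) (ht : 2 ≤ t) :
    IsLeast {m | ∃ S : Finset (WreathSS k t),
      S.card = m ∧ Subgroup.closure (S : Set (WreathSS k t)) = ⊤} 2 := by
  obtain ⟨k, rfl⟩ := Nat.exists_eq_add_of_le' hk
  obtain ⟨t, rfl⟩ := Nat.exists_eq_add_of_le' ht
  have hlower (S : Finset (WreathSS (k + 2) (t + 2)))
      (hS : Subgroup.closure (S : Set (WreathSS (k + 2) (t + 2))) = ⊤) : 2 ≤ S.card :=
    Subgroup.two_le_card_of_closure_eq_top_s10 (WreathSS.not_commute_inl_inr k t) hS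
  have hgen : Subgroup.closure
      (({WreathSS.genX k t, WreathSS.genY k t} : Finset (WreathSS (k + 2) (t + 2))) :
        Set (WreathSS (k + 2) (t + 2))) = ⊤ := by
    simpa using WreathSS.closure_genX_genY k t
  refine ⟨⟨_, le_antisymm Finset.card_le_two (hlower _ hgen), hgen⟩, ?_⟩
  rintro m ⟨S, rfl, hS⟩
  exact hlower S hS
end
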